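/- Every Gruenhage topological space has property (*): if X is Gruenhage then there exists a sequence (𝒱ₙ)_{n∈ℕ} of families of open subsets of X such that for all distinct x, y ∈ X there exists n ∈ ℕ with (i) at least one of x, y belonging to ⋃𝒱ₙ, and (ii) every V ∈ 𝒱ₙ containing at most one of x and y. -/

import Mathlib

/-- A topological space is *Gruenhage*. -/
def IsGruenhage (X : Type*) [TopologicalSpace X] : Prop :=
  ∃ 𝒰 : ℕ → Set (Set X),
    (∀ n, ∀ U ∈ 𝒰 n, IsOpen U) ∧
    ∀ x y : X, x ≠ y →
      ∃ n, (∃ U ∈ 𝒰 n, Xor' (x ∈ U) (y ∈ U)) ∧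
        ({U ∈ 𝒰 n | x ∈ U}.Finite ∨ {U ∈ 𝒰 n | y ∈ U}.Finite)

/-- A topological space has *property (*)*. -/
def HasPropertyStar (X : Type*) [TopologicalSpace X] : Prop :=
  ∃ 𝒱 : ℕ → Set (Set X),
    (∀ n, ∀ V ∈ 𝒱 n, IsOpen V) ∧
    ∀ x y : X, x ≠ y →
      ∃ n, (x ∈ ⋃₀ 𝒱 n ∨ y ∈ ⋃₀ 𝒱 n) ∧ ∀ V ∈ 𝒱 n, ¬(x ∈ V ∧ y ∈ V)

/-!
If `𝒰` witnesses that `X` is Gruenhage and `n` works for `x ≠ y`, only finitely many, say `k`,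
members of `𝒰 n` contain both points. Intersecting a member of `𝒰 n` that separates `x` and `y`
with those `k` sets gives an open set containing one of the points which is the intersection of
`k + 1` members of `𝒰 n`, while no intersection of `k + 1` members of `𝒰 n` contains both points.
So the families of intersections of `k`-element subfamilies of `𝒰 n`, indexed by `(n, k)`,
witness property (*).
-/

open Set

def sInterOfCard {α : Type*} (𝒰 : Set (Set α)) (k : ℕ) : Set (Set α) :=
  {V | ∃ F ⊆ 𝒰, F.encard = k ∧ ⋂₀ F = V}

theorem isOpen_of_mem_sInterOfCard {X : Type*} [TopologicalSpace X] {𝒰 : Set (Set X)}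
    (h𝒰 : ∀ U ∈ 𝒰, IsOpen U) {k : ℕ} {V : Set X} (hV : V ∈ sInterOfCard 𝒰 k) : IsOpen V := by
  obtain ⟨F, hF𝒰, hFk, rfl⟩ := hV
  exact (finite_of_encard_eq_coe hFk).isOpen_sInter fun U hU => h𝒰 U (hF𝒰 hU)

theorem encard_le_of_mem_sInter {α : Type*} {𝒰 F : Set (Set α)} {x y : α} (hF : F ⊆ 𝒰)
    (hx : x ∈ ⋂₀ F) (hy : y ∈ ⋂₀ F) : F.encard ≤ {U ∈ 𝒰 | x ∈ U ∧ y ∈ U}.encard :=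
  encard_le_encard fun U hU => ⟨hF hU, hx U hU, hy U hU⟩

theorem exists_sInterOfCard_separating {α : Type*} {𝒰 : Set (Set α)} {x y : α} {U : Set α}
    (hU : U ∈ 𝒰) (hxy : Xor (x ∈ U) (y ∈ U)) (hfin : {U ∈ 𝒰 | x ∈ U ∧ y ∈ U}.Finite) :
    ∃ k, (x ∈ ⋃₀ sInterOfCard 𝒰 k ∨ y ∈ ⋃₀ sInterOfCard 𝒰 k) ∧
      ∀ V ∈ sInterOfCard 𝒰 k, ¬(x ∈ V ∧ y ∈ V) := by
  set S := {U ∈ 𝒰 | x ∈ U ∧ y ∈ U}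
  have hUS : U ∉ S := by
    rcases hxy with ⟨-, hy⟩ | ⟨-, hx⟩
    exacts [fun h => hy h.2.2, fun h => hx h.2.1]
  have hcard : (insert U S).encard = ↑(S.ncard + 1) := by
    rw [encard_insert_of_notMem hUS, ← hfin.cast_ncard_eq]
    rfl
  have hmem : ⋂₀ insert U S ∈ sInterOfCard 𝒰 (S.ncard + 1) :=
    ⟨insert U S, insert_subset hU fun V hV => hV.1, hcard, rfl⟩
  refine ⟨S.ncard + 1, ?_, ?_⟩
  · rw [sInter_insert] at hmem
    rcases hxy with ⟨hx, -⟩ | ⟨hy, -⟩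
    · exact Or.inl ⟨_, hmem, hx, fun V hV => hV.2.1⟩
    · exact Or.inr ⟨_, hmem, hy, fun V hV => hV.2.2⟩
  · rintro V ⟨F, hF𝒰, hFk, rfl⟩ ⟨hx, hy⟩
    have hle := encard_le_of_mem_sInter hF𝒰 hx hy
    rw [hFk, ← hfin.cast_ncard_eq] at hle
    exact absurd (ENat.natCast_le_natCast.mp hle) (Nat.not_succ_le_self _)

theorem hasPropertyStar_of_countable {X : Type*} [TopologicalSpace X] {ι : Type*} [Countable ι]
    [Nonempty ι] (𝒱 : ι → Set (Set X)) (hopen : ∀ i, ∀ V ∈ 𝒱 i, IsOpen V)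
    (hsep : ∀ x y : X, x ≠ y →
      ∃ i, (x ∈ ⋃₀ 𝒱 i ∨ y ∈ ⋃₀ 𝒱 i) ∧ ∀ V ∈ 𝒱 i, ¬(x ∈ V ∧ y ∈ V)) :
    HasPropertyStar X := by
  obtain ⟨e, he⟩ := exists_surjective_nat ι
  refine ⟨𝒱 ∘ e, fun n => hopen (e n), fun x y hxy => ?_⟩
  obtain ⟨i, hi⟩ := hsep x y hxy
  obtain ⟨n, rfl⟩ := he i
  exact ⟨n, hi⟩

/-- Every Gruenhage space has property (*). -/
theorem isGruenhage_hasPropertyStar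
    {X : Type*} [TopologicalSpace X] (h : IsGruenhage X) :
    HasPropertyStar X := by
  obtain ⟨𝒰, hopen, hsep⟩ := h
  refine hasPropertyStar_of_countable (fun p : ℕ × ℕ => sInterOfCard (𝒰 p.1) p.2)
    (fun p _ hV => isOpen_of_mem_sInterOfCard (hopen p.1) hV) fun x y hxy => ?_
  obtain ⟨n, ⟨U, hU, hxor⟩, hfin⟩ := hsep x y hxy
  have hboth : {U ∈ 𝒰 n | x ∈ U ∧ y ∈ U}.Finite :=
    hfin.elim (·.subset fun V hV => ⟨hV.1, hV.2.1⟩) (·.subset fun V hV => ⟨hV.1, hV.2.2⟩)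
  obtain ⟨k, hk⟩ := exists_sInterOfCard_separating hU hxor hboth
  exact ⟨(n, k), hk⟩
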